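/- Let A be an n×n complex matrix and r ≥ 1 an integer. For i = 1,…,r let Z^{(i)} = diag(z₁^{(i)},…,z_n^{(i)}) be diagonal matrices in rn independent indeterminates. Then, as an identity of polynomials in x: Σ_{X ∈ P_r} χ[A_X](x) = (1/(r−1)!)^n · [∏_{m=1}^n (∂_{z_m^{(1)}} + ⋯ + ∂_{z_m^{(r)}})^{r−1}] applied to ∏_{i=1}^r det(Z^{(i)} − A), with all rn variables then set equal to x. -/

import Mathlib

/-!
Expanding every `det (Z⁽ⁱ⁾ - A)` by the Leibniz formula writes `∏ᵢ det (Z⁽ⁱ⁾ - A)` as a signed sum,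
over tuples `(σᵢ)` of permutations, of products `∏ₐ gₐ` where
`gₐ = ∏ᵢ (Z⁽ⁱ⁾ - A)_{σᵢ a, a}` only involves the variables `z_a⁽¹⁾, …, z_a⁽ʳ⁾`, each affinely.
Hence `D_m = ∑ᵢ ∂/∂z_m⁽ⁱ⁾` only acts on `g_m`, and as `D_m` kills the derivative of an affine
factor, `D_a^(r-1) gₐ / (r-1)!` is the sum over `j` of the products in which every factor but the
`j`-th is differentiated. At `z = x` the differentiated factors become `δ_{σᵢ a, a}` and the
remaining one `(x - A)_{σⱼ a, a}`. Choosing `j = c a` for every `a` and summing over `σ`, the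
result factors over `i` into determinants of the matrices equal to `x - A` on the columns of the
block `c⁻¹(i)` and to the identity elsewhere, i.e. into the characteristic polynomials of the
diagonal blocks of the paving `A_c`, whose product is `χ[A_c]`.
-/

open Polynomial Matrix

/-- The `r`-paving of `A` determined by the colouring `c : Fin n → Fin r`. -/
def paving {n r : ℕ} (A : Matrix (Fin n) (Fin n) ℂ) (c : Fin n → Fin r) :
    Matrix (Fin n) (Fin n) ℂ :=
  Matrix.of fun i j => if c i = c j then A i j else 0

/-- The formal partial derivative `∂/∂z_m^{(i)}`, as a linear endomorphism of the
polynomial ring `ℂ[z_m^{(i)} : 1 ≤ m ≤ n, 1 ≤ i ≤ r]`. -/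
noncomputable def pd {n r : ℕ} (v : Fin n × Fin r) :
    MvPolynomial (Fin n × Fin r) ℂ →ₗ[ℂ] MvPolynomial (Fin n × Fin r) ℂ :=
  (MvPolynomial.pderiv v).toLinearMap

/-- The matrix `Z^{(i)} - A` where `Z^{(i)} = diag(z₁^{(i)},…,z_n^{(i)})`. -/
noncomputable def ZisubA {n r : ℕ} (A : Matrix (Fin n) (Fin n) ℂ) (i : Fin r) :
    Matrix (Fin n) (Fin n) (MvPolynomial (Fin n × Fin r) ℂ) :=
  Matrix.of fun a b => (if a = b then MvPolynomial.X (a, i) else 0) - MvPolynomial.C (A a b)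

open Finset

theorem Finset.powersetCard_eq_image_erase {ι : Type*} [DecidableEq ι] {s : Finset ι} {k : ℕ}
    (hk : #s = k + 1) : s.powersetCard k = s.image s.erase := by
  ext t
  simp only [mem_powersetCard, mem_image]
  constructor
  · rintro ⟨hts, hcard⟩
    obtain ⟨j, hj⟩ := card_eq_one.1 (show #(s \ t) = 1 by rw [card_sdiff_of_subset hts]; omega)
    refine ⟨j, (mem_sdiff.1 (hj ▸ mem_singleton_self j)).1, ?_⟩
    rw [← sdiff_singleton_eq_erase, ← hj, sdiff_sdiff_eq_self hts]
  · rintro ⟨j, hj, rfl⟩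
    exact ⟨erase_subset j s, by rw [card_erase_of_mem hj, hk, Nat.add_sub_cancel]⟩

namespace Derivation

variable {R A : Type*} [CommSemiring R] [CommSemiring A] [Algebra R A] (D : Derivation R A A)

theorem iterate_mul_of_map_eq_zero {b : A} (hb : D b = 0) (a : A) (k : ℕ) :
    D^[k] (a * b) = D^[k] a * b := by
  induction k with
  | zero => rfl
  | succ k ih =>
    rw [Function.iterate_succ_apply', ih, leibniz, hb, smul_zero, zero_add, smul_eq_mul, mul_comm,
      Function.iterate_succ_apply']

theorem map_prod_eq_zero {ι : Type*} {s : Finset ι} {f : ι → A} (hf : ∀ i ∈ s, D (f i) = 0) :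
    D (∏ i ∈ s, f i) = 0 :=
  prod_induction f (D · = 0) (fun a b ha hb => by simp [leibniz, ha, hb]) D.map_one_eq_zero hf

theorem iterate_succ_mul_of_map_map_eq_zero {a : A} (ha : D (D a) = 0) (b : A) (k : ℕ) :
    D^[k + 1] (a * b) = a * D^[k + 1] b + (k + 1) • (D a * D^[k] b) := by
  induction k with
  | zero => simp [leibniz, mul_comm]
  | succ k ih =>
    rw [Function.iterate_succ_apply', ih, Function.iterate_succ_apply' _ (k + 1)]
    simp only [map_add, map_nsmul, leibniz, ha, smul_eq_mul, mul_zero, add_zero,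
      ← Function.iterate_succ_apply' D]
    ring

theorem iterate_prod_of_map_map_eq_zero {ι : Type*} [DecidableEq ι] {s : Finset ι} {f : ι → A}
    (hf : ∀ i ∈ s, D (D (f i)) = 0) (k : ℕ) :
    D^[k] (∏ i ∈ s, f i) =
      k.factorial • ∑ t ∈ s.powersetCard k, (∏ i ∈ t, D (f i)) * ∏ i ∈ s \ t, f i := by
  induction s using Finset.induction_on generalizing k with
  | empty =>
    cases k with
    | zero => simp
    | succ k => simp [map_one_eq_zero, powersetCard_eq_empty.2 (card_empty.trans_lt k.succ_pos)]
  | @insert j s hj ih =>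
    cases k with
    | zero => simp
    | succ k =>
    have hjt : ∀ {k}, ∀ t ∈ s.powersetCard k, j ∉ t :=
      fun t ht hjt => hj ((mem_powersetCard.1 ht).1 hjt)
    have hsucc : ∀ t ∈ s.powersetCard (k + 1),
        (∏ i ∈ t, D (f i)) * ∏ i ∈ insert j s \ t, f i
          = f j * ((∏ i ∈ t, D (f i)) * ∏ i ∈ s \ t, f i) := by
      intro t ht
      rw [insert_sdiff_of_notMem _ (hjt t ht), prod_insert fun h => hj (mem_sdiff.1 h).1]
      ring
    have hinsert : ∀ t ∈ s.powersetCard k,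
        (∏ i ∈ insert j t, D (f i)) * ∏ i ∈ insert j s \ insert j t, f i
          = D (f j) * ((∏ i ∈ t, D (f i)) * ∏ i ∈ s \ t, f i) := by
      intro t ht
      rw [prod_insert (hjt t ht), insert_sdiff_insert, sdiff_insert_of_notMem hj]
      ring
    have hinj : Set.InjOn (insert j) (s.powersetCard k : Set (Finset ι)) :=
      fun t ht u hu htu => by rw [← erase_insert (hjt t ht), htu, erase_insert (hjt u hu)]
    have hdisj : Disjoint (s.powersetCard (k + 1)) ((s.powersetCard k).image (insert j)) :=
      disjoint_left.2 fun t ht htj => by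
        obtain ⟨u, -, rfl⟩ := mem_image.1 htj
        exact hjt _ ht (mem_insert_self j u)
    have hf' : ∀ i ∈ s, D (D (f i)) = 0 := fun i hi => hf i (mem_insert_of_mem hi)
    rw [prod_insert hj, D.iterate_succ_mul_of_map_map_eq_zero (hf j (mem_insert_self j s)),
      ih hf', ih hf', powersetCard_succ_insert hj, sum_union hdisj, sum_image hinj,
      sum_congr rfl hsucc, sum_congr rfl hinsert, ← mul_sum, ← mul_sum, Nat.factorial_succ]
    simp only [nsmul_eq_mul]
    push_cast
    ring

theorem list_prod_map_pow_apply_prod {ι : Type*} [Fintype ι] [DecidableEq ι]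
    (D : ι → Derivation R A A) (hcomm : ∀ m a x, D m (D a x) = D a (D m x))
    {g : ι → A} (hg : ∀ m a, m ≠ a → D m (g a) = 0) (k : ℕ) {l : List ι} (hl : l.Nodup) :
    (l.map fun m => (D m : A →ₗ[R] A) ^ k).prod (∏ a, g a) =
      ∏ a, if a ∈ l then (D a)^[k] (g a) else g a := by
  induction l with
  | nil => simp
  | cons m l ih =>
    obtain ⟨hml, hl⟩ := List.nodup_cons.1 hl
    set h : ι → A := fun a => if a ∈ l then (D a)^[k] (g a) else g a
    have hloc : ∀ a ∈ univ.erase m, D m (h a) = 0 := fun a ha => by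
      have hma := (ne_of_mem_erase ha).symm
      by_cases hal : a ∈ l
      · simp only [h, if_pos hal, (Function.Commute.iterate_right (hcomm m a) k) (g a),
          hg m a hma, iterate_map_zero]
      · simp only [h, if_neg hal, hg m a hma]
    rw [List.map_cons, List.prod_cons, Module.End.mul_apply, ih hl, Module.End.pow_apply,
      coeFn_coe, ← mul_prod_erase univ h (mem_univ m),
      iterate_mul_of_map_eq_zero _ (map_prod_eq_zero _ hloc), ← mul_prod_erase univ _ (mem_univ m)]
    congr 1
    · simp [h, hml]
    · exact prod_congr rfl fun a ha => by simp [h, ne_of_mem_erase ha]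

end Derivation

namespace MvPolynomial

theorem pderiv_pderiv_comm {σ R : Type*} [CommRing R] (i j : σ) (p : MvPolynomial σ R) :
    pderiv i (pderiv j p) = pderiv j (pderiv i p) := by
  classical
  have h : ⁅pderiv i, pderiv j⁆ = (0 : Derivation R (MvPolynomial σ R) (MvPolynomial σ R)) :=
    derivation_ext fun k => by
      rw [Derivation.commutator_apply]
      simp only [pderiv_X, Pi.single_apply]
      split_ifs <;> simp
  simpa [Derivation.commutator_apply, sub_eq_zero] using DFunLike.congr_fun h p

variable {ι κ R : Type*} [Fintype κ]

noncomputable def rowPderiv [CommSemiring R] (m : ι) :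
    Derivation R (MvPolynomial (ι × κ) R) (MvPolynomial (ι × κ) R) :=
  ∑ i : κ, pderiv (m, i)

theorem rowPderiv_apply [CommSemiring R] (m : ι) (p : MvPolynomial (ι × κ) R) :
    rowPderiv m p = ∑ i : κ, pderiv (m, i) p := by
  rw [rowPderiv, ← Derivation.coeFnAddMonoidHom_apply, map_sum, Finset.sum_apply]
  rfl

theorem rowPderiv_comm [CommRing R] (m a : ι) (p : MvPolynomial (ι × κ) R) :
    rowPderiv m (rowPderiv a p) = rowPderiv a (rowPderiv (R := R) (κ := κ) m p) := by
  simp only [rowPderiv_apply, map_sum, pderiv_pderiv_comm (m, _)]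
  exact sum_comm

end MvPolynomial

namespace Matrix

variable {ι κ R : Type*} [Fintype ι] [DecidableEq ι] [CommRing R]

theorem det_toSquareBlockProp (M : Matrix ι ι R) (p : ι → Prop) [DecidablePred p] :
    (M.toSquareBlockProp p).det =
      (of fun b a => if p a then M b a else (1 : Matrix ι ι R) b a).det := by
  rw [twoBlockTriangular_det' _ p fun b hb a ha => by
    rw [of_apply, if_neg ha, one_apply_ne fun (h : b = a) => ha (h ▸ hb)]]
  have hp : (of fun b a => if p a then M b a else (1 : Matrix ι ι R) b a).toSquareBlockProp p =
      M.toSquareBlockProp p := by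
    ext ⟨b, hb⟩ ⟨a, ha⟩
    simp [toSquareBlockProp_def, ha]
  have hnp : (of fun b a => if p a then M b a else (1 : Matrix ι ι R) b a).toSquareBlockProp
      (¬p ·) = 1 := by
    ext ⟨b, hb⟩ ⟨a, ha⟩
    simp [toSquareBlockProp_def, ha, one_apply]
  rw [hp, hnp, det_one, mul_one]

theorem prod_det_apply [Fintype κ] [DecidableEq κ] (N : κ → Matrix ι ι R) :
    ∏ k, (N k).det =
      ∑ σ : κ → Equiv.Perm ι, (∏ k, (Equiv.Perm.sign (σ k) : ℤ)) • ∏ a, ∏ k, N k (σ k a) a := by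
  simp_rw [det_apply', prod_univ_sum, Fintype.piFinset_univ, prod_mul_distrib, zsmul_eq_mul]
  push_cast
  simp [prod_comm (s := (univ : Finset κ))]

end Matrix

section Paving

open MvPolynomial

variable {n r : ℕ} (A : Matrix (Fin n) (Fin n) ℂ)

theorem charpoly_paving_eq_prod_det (c : Fin n → Fin r) :
    (paving A c).charpoly = ∏ k, ((charmatrix A).toSquareBlockProp (c · = k)).det := by
  have hblock : (paving A c).BlockTriangular c := fun i j hij => by simp [paving, hij.ne']
  rw [charpoly, hblock.charmatrix.det_fintype]
  refine prod_congr rfl fun k _ => congrArg det ?_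
  ext ⟨b, hb⟩ ⟨a, ha⟩
  simp [toSquareBlock_def, toSquareBlockProp_def, charmatrix_apply, paving, hb, ha]

theorem ofFn_sum_pd_pow (k : ℕ) :
    List.ofFn (fun m : Fin n => (∑ i : Fin r, pd (m, i)) ^ k) =
      (List.finRange n).map fun m =>
        ((rowPderiv m : Derivation ℂ (MvPolynomial (Fin n × Fin r) ℂ) _) :
          MvPolynomial (Fin n × Fin r) ℂ →ₗ[ℂ] _) ^ k := by
  rw [List.ofFn_eq_map]
  congr
  funext m
  congr 1
  ext p
  simp [pd, rowPderiv_apply]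

theorem rowPderiv_ZisubA (m : Fin n) (i : Fin r) (b a : Fin n) :
    rowPderiv m (ZisubA A i b a) = if m = a ∧ b = a then 1 else 0 := by
  by_cases hba : b = a
  · subst hba
    by_cases hm : m = b <;> simp [ZisubA, rowPderiv_apply, pderiv_X, Pi.single_apply, hm, eq_comm]
  · simp [ZisubA, rowPderiv_apply, hba]

theorem rowPderiv_prod_ZisubA_of_ne (σ : Fin r → Equiv.Perm (Fin n)) {m a : Fin n} (hma : m ≠ a) :
    rowPderiv m (∏ i, ZisubA A i (σ i a) a) = 0 :=
  Derivation.map_prod_eq_zero _ fun i _ => by rw [rowPderiv_ZisubA, if_neg fun h => hma h.1]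

theorem aeval_ZisubA (i : Fin r) (b a : Fin n) :
    aeval (fun _ => (Polynomial.X : ℂ[X])) (ZisubA A i b a) = charmatrix A b a := by
  by_cases hba : b = a <;> simp [ZisubA, hba]

theorem aeval_iterate_rowPderiv_prod_ZisubA (hr : 1 ≤ r) (σ : Fin r → Equiv.Perm (Fin n))
    (a : Fin n) :
    aeval (fun _ => (Polynomial.X : ℂ[X])) ((rowPderiv a)^[r - 1] (∏ i, ZisubA A i (σ i a) a)) =
      ((r - 1).factorial : ℂ) • ∑ j, ∏ i,
        if j = i then charmatrix A (σ i a) a else (1 : Matrix (Fin n) (Fin n) ℂ[X]) (σ i a) a := by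
  have hD2 : ∀ i ∈ univ, rowPderiv a (rowPderiv a (ZisubA A i (σ i a) a)) = 0 := fun i _ => by
    rw [rowPderiv_ZisubA]
    split_ifs <;> simp
  rw [(rowPderiv a).iterate_prod_of_map_map_eq_zero hD2,
    powersetCard_eq_image_erase (by rw [card_univ, Fintype.card_fin]; omega),
    sum_image (erase_injOn _), map_nsmul, map_sum, ← Nat.cast_smul_eq_nsmul ℂ]
  congr 1
  refine sum_congr rfl fun j _ => ?_
  rw [sdiff_erase_self (mem_univ j), prod_singleton, map_mul, map_prod, mul_comm,
    ← mul_prod_erase univ _ (mem_univ j), if_pos rfl, aeval_ZisubA]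
  congr 1
  refine prod_congr rfl fun i hi => ?_
  rw [if_neg (ne_of_mem_erase hi).symm, rowPderiv_ZisubA, one_apply]
  split_ifs <;> simp_all

end Paving

/-- The sum of the characteristic polynomials of all `r`-pavings of `A` equals
`(1/(r-1)!)^n Π_m (∂_{z_m^{(1)}} + ⋯ + ∂_{z_m^{(r)}})^{r-1}` applied to
`Π_i det(Z^{(i)} - A)`, with all `rn` variables then set equal to `x`. -/
theorem sum_paving_charpoly_eq_multivariate {n : ℕ} (r : ℕ) (hr : 1 ≤ r)
    (A : Matrix (Fin n) (Fin n) ℂ) :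
    ∑ c : Fin n → Fin r, (paving A c).charpoly
      = (((r-1).factorial : ℂ) ^ n)⁻¹ •
        MvPolynomial.aeval (fun _ : Fin n × Fin r => (Polynomial.X : Polynomial ℂ))
          (((List.ofFn (fun m : Fin n => (∑ i : Fin r, pd (m, i)) ^ (r-1))).prod)
            (∏ i : Fin r, (ZisubA A i).det)) := by
  have hfact : ((r - 1).factorial : ℂ) ^ n ≠ 0 :=
    pow_ne_zero n (Nat.cast_ne_zero.2 (Nat.factorial_ne_zero _))
  simp_rw [charpoly_paving_eq_prod_det, Matrix.det_toSquareBlockProp, Matrix.prod_det_apply,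
    Matrix.of_apply]
  rw [ofFn_sum_pd_pow, map_sum, map_sum, smul_sum, sum_comm]
  refine sum_congr rfl fun σ _ => ?_
  rw [map_zsmul, map_zsmul, Derivation.list_prod_map_pow_apply_prod _ MvPolynomial.rowPderiv_comm
    (fun _ _ => rowPderiv_prod_ZisubA_of_ne A σ) _ (List.nodup_finRange n), map_prod]
  simp only [List.mem_finRange, if_true, aeval_iterate_rowPderiv_prod_ZisubA A hr]
  rw [← smul_prod, card_univ, Fintype.card_fin, smul_comm, inv_smul_smul₀ hfact, prod_univ_sum,
    Fintype.piFinset_univ, smul_sum]
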